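/- arXiv:2405.18412 — 3 statements merged into one kernel-verified Lean document; each statement's English description precedes it below -/
import Mathlib

section
/- If T = Σ_{i=1}^r λ_i a_i ∘ b_i ∘ c_i is ODECO with all λ_i > 0, then the spectral norm of T equals max_i λ_i. -/
/-!
Writing `T = ∑ᵢ λᵢ aᵢ ∘ bᵢ ∘ cᵢ`, the form `⟨T, u ∘ v ∘ w⟩` equals `∑ᵢ λᵢ αᵢ βᵢ γᵢ` with
`αᵢ = ⟨aᵢ, u⟩`, `βᵢ = ⟨bᵢ, v⟩`, `γᵢ = ⟨cᵢ, w⟩`. By Bessel's inequality the vectors `α, β, γ` lie in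
the unit ball, so `|γᵢ| ≤ 1` and `|αᵢ βᵢ| ≤ (αᵢ² + βᵢ²) / 2`, which bounds the form by `maxᵢ λᵢ`.
The bound is attained at `(u, v, w) = (aᵢ, bᵢ, cᵢ)` for a maximizing `i`.
-/

open Finset

theorem contract_sum_outer_eq_sum_dotProduct {ι m n o : Type*} [Fintype ι] [Fintype m]
    [Fintype n] [Fintype o] (lam : ι → ℝ) (a : ι → m → ℝ) (b : ι → n → ℝ) (c : ι → o → ℝ)
    (u : m → ℝ) (v : n → ℝ) (w : o → ℝ) :
    ∑ p, ∑ q, ∑ s, (∑ i, lam i * (a i p * b i q * c i s)) * (u p * v q * w s)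
      = ∑ i, lam i * (a i ⬝ᵥ u) * (b i ⬝ᵥ v) * (c i ⬝ᵥ w) := by
  simp_rw [sum_mul, sum_comm (t := (univ : Finset ι))]
  refine sum_congr rfl fun i _ => ?_
  simp only [dotProduct, mul_sum, sum_mul]
  simp_rw [sum_comm (t := (univ : Finset m)),
    sum_comm (s := (univ : Finset o)) (t := (univ : Finset n))]
  congr! 3
  ring

theorem sum_sq_dotProduct_le_of_orthonormal {ι n : Type*} [Fintype ι] [Fintype n] [DecidableEq ι]
    {a : ι → n → ℝ} (ha : ∀ i j, a i ⬝ᵥ a j = if i = j then 1 else 0) (u : n → ℝ) :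
    ∑ i, (a i ⬝ᵥ u) ^ 2 ≤ ∑ p, u p ^ 2 := by
  have hon : Orthonormal ℝ fun i => (WithLp.toLp 2 (a i) : EuclideanSpace ℝ n) :=
    orthonormal_iff_ite.2 fun i j => by
      simpa [EuclideanSpace.inner_eq_star_dotProduct, dotProduct_comm] using ha i j
  simpa [EuclideanSpace.inner_eq_star_dotProduct, EuclideanSpace.real_norm_sq_eq,
    dotProduct_comm] using hon.sum_inner_products_le (WithLp.toLp 2 u) (s := univ)

theorem abs_le_one_of_sum_sq_le_one {ι : Type*} [Fintype ι] {γ : ι → ℝ}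
    (hγ : ∑ i, γ i ^ 2 ≤ 1) (i : ι) : |γ i| ≤ 1 :=
  (sq_le_one_iff_abs_le_one _).1 <|
    (single_le_sum (fun j _ => sq_nonneg (γ j)) (mem_univ i)).trans hγ

theorem sum_mul_mul_mul_le {ι : Type*} [Fintype ι] {lam α β γ : ι → ℝ} {M : ℝ} (hM : 0 ≤ M)
    (hlam : ∀ i, |lam i| ≤ M) (hα : ∑ i, α i ^ 2 ≤ 1) (hβ : ∑ i, β i ^ 2 ≤ 1)
    (hγ : ∀ i, |γ i| ≤ 1) :
    ∑ i, lam i * α i * β i * γ i ≤ M := by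
  have hterm : ∀ i, lam i * α i * β i * γ i ≤ M / 2 * (α i ^ 2 + β i ^ 2) := fun i => by
    have amgm : 2 * (|α i| * |β i|) ≤ α i ^ 2 + β i ^ 2 := by
      simpa [sq_abs, mul_assoc] using two_mul_le_add_sq |α i| |β i|
    calc lam i * α i * β i * γ i ≤ |lam i * α i * β i * γ i| := le_abs_self _
      _ = |lam i| * (|α i| * |β i|) * |γ i| := by simp only [abs_mul]; ring
      _ ≤ M * (|α i| * |β i|) * 1 := by gcongr; exacts [hlam i, hγ i]
      _ ≤ M / 2 * (α i ^ 2 + β i ^ 2) := by nlinarith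
  calc ∑ i, lam i * α i * β i * γ i ≤ ∑ i, M / 2 * (α i ^ 2 + β i ^ 2) :=
        sum_le_sum fun i _ => hterm i
    _ = M / 2 * (∑ i, α i ^ 2 + ∑ i, β i ^ 2) := by rw [← mul_sum, sum_add_distrib]
    _ ≤ M := by nlinarith

/-- For an ODECO tensor `T = ∑ᵢ λᵢ aᵢ ∘ bᵢ ∘ cᵢ` with all `λᵢ > 0`,
the spectral norm of `T` equals `maxᵢ λᵢ`. -/
theorem odeco_spectral_norm_eq_max
    (d r : ℕ) (hr : 0 < r) (lam : Fin r → ℝ) (a b c : Fin r → Fin d → ℝ)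
    (hlam : ∀ i, 0 < lam i)
    (ha : ∀ i j, (∑ p, a i p * a j p) = if i = j then (1 : ℝ) else 0)
    (hb : ∀ i j, (∑ p, b i p * b j p) = if i = j then (1 : ℝ) else 0)
    (hc : ∀ i j, (∑ p, c i p * c j p) = if i = j then (1 : ℝ) else 0) :
    sSup {x : ℝ | ∃ u v w : Fin d → ℝ, (∑ p, u p ^ 2 = 1) ∧ (∑ p, v p ^ 2 = 1) ∧
        (∑ p, w p ^ 2 = 1) ∧
        x = ∑ p, ∑ q, ∑ s, (∑ i, lam i * (a i p * b i q * c i s)) * (u p * v q * w s)}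
      = Finset.univ.sup' ⟨⟨0, hr⟩, Finset.mem_univ _⟩ lam := by
  obtain ⟨i₀, -, hi₀⟩ := exists_mem_eq_sup' ⟨⟨0, hr⟩, mem_univ _⟩ lam
  refine IsGreatest.csSup_eq ⟨⟨a i₀, b i₀, c i₀, ?_, ?_, ?_, ?_⟩, ?_⟩
  · simpa [sq] using ha i₀ i₀
  · simpa [sq] using hb i₀ i₀
  · simpa [sq] using hc i₀ i₀
  · rw [contract_sum_outer_eq_sum_dotProduct, hi₀]
    simp [dotProduct, ha, hb, hc]
  · rintro x ⟨u, v, w, hu, hv, hw, rfl⟩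
    rw [contract_sum_outer_eq_sum_dotProduct]
    refine sum_mul_mul_mul_le (hi₀ ▸ (hlam i₀).le) (fun i => ?_)
      ((sum_sq_dotProduct_le_of_orthonormal ha u).trans hu.le)
      ((sum_sq_dotProduct_le_of_orthonormal hb v).trans hv.le)
      (abs_le_one_of_sum_sq_le_one ((sum_sq_dotProduct_le_of_orthonormal hc w).trans hw.le))
    rw [abs_of_pos (hlam i)]
    exact le_sup' lam (mem_univ i)
end

section
/- For the Gaussian mixture X = μ_J + Z with Z ~ N(0, I_d) independent of J, the adjusted third moment tensor E(X ∘ X ∘ X) − Σ_{i=1}^d E(X ∘ e_i ∘ e_i + e_i ∘ X ∘ e_i + e_i ∘ e_i ∘ X) equals Σ_{j=1}^m p_j μ_j ∘ μ_j ∘ μ_j. -/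
open scoped BigOperators
open MeasureTheory Real ProbabilityTheory Set
open scoped NNReal ENNReal

lemma gmix_pdf_eq (x : ℝ) :
    gaussianPDFReal 0 1 x = (√(2 * π))⁻¹ * rexp (-(2⁻¹) * x ^ 2) := by
  simp only [gaussianPDFReal, NNReal.coe_one, mul_one, sub_zero]
  congr 1
  ring_nf

lemma gmix_integrable_abs_pow (n : ℕ) :
    Integrable (fun x : ℝ => |x| ^ n * rexp (-(2⁻¹) * x ^ 2)) := by
  have h := (integrable_rpow_mul_exp_neg_mul_sq (b := 2⁻¹) (by norm_num)
      (s := (n : ℝ)) (by exact lt_of_lt_of_le neg_one_lt_zero (Nat.cast_nonneg n))).abs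
  refine h.congr ?_
  filter_upwards with x
  rw [Real.rpow_natCast, abs_mul, abs_of_nonneg (Real.exp_pos _).le, abs_pow]

lemma gmix_integral_transfer (f : ℝ → ℝ) :
    ∫ x, f x ∂(gaussianReal 0 1)
      = ∫ x, gaussianPDFReal 0 1 x * f x := by
  rw [gaussianReal_of_var_ne_zero 0 one_ne_zero]
  have : gaussianPDF 0 1 = fun x => ((Real.toNNReal (gaussianPDFReal 0 1 x) : ℝ≥0) : ℝ≥0∞) := by
    funext x; rfl
  rw [this, integral_withDensity_eq_integral_smul
    ((measurable_gaussianPDFReal 0 1).real_toNNReal)]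
  congr 1; funext x
  rw [NNReal.smul_def, smul_eq_mul, Real.coe_toNNReal _ (gaussianPDFReal_nonneg 0 1 x)]

lemma gmix_integrable_pow (n : ℕ) :
    Integrable (fun x : ℝ => x ^ n) (gaussianReal 0 1) := by
  rw [gaussianReal_of_var_ne_zero 0 one_ne_zero]
  have : gaussianPDF 0 1 = fun x => ((Real.toNNReal (gaussianPDFReal 0 1 x) : ℝ≥0) : ℝ≥0∞) := by
    funext x; rfl
  rw [this, integrable_withDensity_iff ((measurable_gaussianPDFReal 0 1).real_toNNReal).coe_nnreal_ennreal (by simp)]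
  have : Integrable (fun x : ℝ => (√(2 * π))⁻¹ * (|x| ^ n * rexp (-(2⁻¹) * x ^ 2))) :=
    (gmix_integrable_abs_pow n).const_mul _
  refine this.mono' ?_ ?_
  · exact ((measurable_id.pow_const n).mul
      ((measurable_gaussianPDFReal 0 1).real_toNNReal.coe_nnreal_real)).aestronglyMeasurable
  · filter_upwards with x
    have hco : ((Real.toNNReal (gaussianPDFReal 0 1 x) : ℝ≥0) : ℝ) = gaussianPDFReal 0 1 x :=
      Real.coe_toNNReal _ (gaussianPDFReal_nonneg 0 1 x)
    simp only [ENNReal.coe_toReal] at hco ⊢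
    rw [hco, gmix_pdf_eq, norm_mul, norm_pow, Real.norm_eq_abs,
      norm_of_nonneg (by positivity : (0:ℝ) ≤ (√(2 * π))⁻¹ * rexp (-(2⁻¹) * x ^ 2))]
    ring_nf
    exact le_refl _

lemma gmix_pdf_even (x : ℝ) : gaussianPDFReal 0 1 (-x) = gaussianPDFReal 0 1 x := by
  rw [gmix_pdf_eq, gmix_pdf_eq, neg_pow]
  norm_num

lemma gmix_m_odd (n : ℕ) (hn : Odd n) :
    ∫ x, x ^ n ∂(ProbabilityTheory.gaussianReal 0 1) = 0 := by
  rw [gmix_integral_transfer]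
  have key : ∫ x : ℝ, gaussianPDFReal 0 1 x * x ^ n
      = -∫ x : ℝ, gaussianPDFReal 0 1 x * x ^ n := by
    conv_lhs => rw [← integral_neg_eq_self (fun x => gaussianPDFReal 0 1 x * x ^ n) volume]
    rw [← integral_neg]
    congr 1; funext x
    rw [hn.neg_pow, gmix_pdf_even]
    ring
  linarith

lemma gmix_sq_exp_integrable :
    Integrable (fun x : ℝ => x ^ 2 * rexp (-(2⁻¹) * x ^ 2)) := by
  have h := integrable_rpow_mul_exp_neg_mul_sq (b := 2⁻¹) (by norm_num) (s := (2 : ℝ))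
      (by norm_num)
  refine h.congr ?_
  filter_upwards with x
  rw [show (2:ℝ) = ((2:ℕ):ℝ) by norm_num, Real.rpow_natCast]

lemma gmix_sq_exp_integral :
    ∫ x : ℝ, x ^ 2 * rexp (-(2⁻¹) * x ^ 2) = √(2 * π) := by
  set L : ℝ → ℝ := fun x => x ^ 2 * rexp (-(2⁻¹) * x ^ 2) with hL
  have hInt : Integrable L := gmix_sq_exp_integrable
  have hIoi : ∫ x in Ioi (0:ℝ), L x = √(2 * π) / 2 := by
    have h := integral_rpow_mul_exp_neg_mul_rpow (p := 2) (q := 2) (b := 2⁻¹)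
      (by norm_num) (by norm_num) (by norm_num)
    have he : ∀ x : ℝ, x ^ (2:ℝ) * rexp (-2⁻¹ * x ^ (2:ℝ)) = L x := by
      intro x
      rw [show (2:ℝ) = ((2:ℕ):ℝ) by norm_num, Real.rpow_natCast]
      simp [hL]
    simp_rw [he] at h
    rw [h]
    have hG : Real.Gamma ((2 + 1) / 2) = √π / 2 := by
      rw [show ((2:ℝ) + 1) / 2 = 1/2 + 1 by norm_num, Real.Gamma_add_one (by norm_num),
        Real.Gamma_one_half_eq]
      ring
    have hpow : (2⁻¹ : ℝ) ^ (-((2:ℝ) + 1) / 2) = 2 * √2 := by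
      rw [show (-((2:ℝ) + 1) / 2) = -(3/2) by norm_num,
        Real.rpow_neg (by norm_num), Real.inv_rpow (by norm_num), inv_inv,
        show (3/2 : ℝ) = 1 + 1/2 by norm_num, Real.rpow_add (by norm_num),
        Real.rpow_one, ← Real.sqrt_eq_rpow]
    rw [hG, hpow, Real.sqrt_mul (by norm_num : (0:ℝ) ≤ 2)]
    ring
  have hneg : ∫ x in Iic (0:ℝ), L x = ∫ x in Ioi (0:ℝ), L x := by
    have h := integral_comp_neg_Ioi (c := (0:ℝ)) (f := L)
    have he : ∀ x : ℝ, L (-x) = L x := by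
      intro x; simp [hL, neg_pow]
    simp_rw [he, neg_zero] at h
    exact h.symm
  have hsplit := intervalIntegral.integral_Iic_add_Ioi (b := (0:ℝ)) (f := L) (μ := volume)
    hInt.integrableOn hInt.integrableOn
  rw [hneg, hIoi] at hsplit
  linarith

lemma gmix_m2 : ∫ x, x ^ 2 ∂(ProbabilityTheory.gaussianReal 0 1) = 1 := by
  rw [gmix_integral_transfer]
  have he : ∀ x : ℝ, gaussianPDFReal 0 1 x * x ^ 2
      = (√(2 * π))⁻¹ * (x ^ 2 * rexp (-(2⁻¹) * x ^ 2)) := by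
    intro x; rw [gmix_pdf_eq]; ring
  simp_rw [he]
  rw [integral_const_mul, gmix_sq_exp_integral]
  rw [inv_mul_cancel₀]
  positivity

lemma gmix_integrable_J {Ω : Type*} [MeasurableSpace Ω] (P : Measure Ω) [IsProbabilityMeasure P]
    {m : ℕ} (J : Ω → Fin m) (hJmeas : Measurable J) (g : Fin m → ℝ) :
    Integrable (fun ω => g (J ω)) P := by
  refine Integrable.mono' (integrable_const (∑ j, |g j|))
    ((measurable_of_countable g).comp hJmeas).aestronglyMeasurable ?_
  filter_upwards with ω
  rw [Real.norm_eq_abs]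
  exact Finset.single_le_sum (f := fun j => |g j|) (fun j _ => abs_nonneg (g j))
    (Finset.mem_univ (J ω))

lemma gmix_integral_J {Ω : Type*} [MeasurableSpace Ω] (P : Measure Ω) [IsProbabilityMeasure P]
    {m : ℕ} (J : Ω → Fin m) (hJmeas : Measurable J) (p : Fin m → ℝ) (hp : ∀ j, 0 ≤ p j)
    (hJ : ∀ j, P {ω | J ω = j} = ENNReal.ofReal (p j)) (g : Fin m → ℝ) :
    ∫ ω, g (J ω) ∂P = ∑ j, p j * g j := by
  have hrepr : ∀ ω, g (J ω) = ∑ j, Set.indicator {ω' | J ω' = j} (fun _ => g j) ω := by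
    intro ω
    rw [Finset.sum_eq_single (J ω)]
    · simp [Set.indicator_apply]
    · intro j _ hj
      simp only [Set.indicator_apply, Set.mem_setOf_eq]
      rw [if_neg (fun h : J ω = j => hj (h ▸ rfl))]
    · intro h; exact absurd (Finset.mem_univ (J ω)) h
  have hms : ∀ j : Fin m, MeasurableSet {ω' | J ω' = j} := by
    intro j
    exact hJmeas (measurableSet_singleton j)
  simp_rw [hrepr]
  rw [integral_finset_sum _ (fun j _ => (integrable_const (g j)).indicator (hms j))]
  refine Finset.sum_congr rfl fun j _ => ?_
  rw [integral_indicator_const _ (hms j), measureReal_def, hJ j, ENNReal.toReal_ofReal (hp j), smul_eq_mul]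

/-- For a Gaussian mixture `X = μ_J + Z` with `Z ~ N(0, I_d)` independent of
`J`, the adjusted third moment tensor
`E(X ∘ X ∘ X) − ∑ᵢ E(X ∘ eᵢ ∘ eᵢ + eᵢ ∘ X ∘ eᵢ + eᵢ ∘ eᵢ ∘ X)` equals
`∑ⱼ p_j μ_j ∘ μ_j ∘ μ_j` (entrywise). -/
theorem gaussian_mixture_adjusted_third_moment
    {Ω : Type*} [MeasurableSpace Ω] (P : Measure Ω) [IsProbabilityMeasure P]
    (d m : ℕ) (J : Ω → Fin m) (Z : Ω → Fin d → ℝ) (μv : Fin m → Fin d → ℝ)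
    (p : Fin m → ℝ) (hp : ∀ j, 0 ≤ p j) (hpsum : ∑ j, p j = 1)
    (hJmeas : Measurable J) (hZmeas : ∀ i, Measurable (fun ω => Z ω i))
    (hJ : ∀ j, P {ω | J ω = j} = ENNReal.ofReal (p j))
    (hZlaw : ∀ i, P.map (fun ω => Z ω i) = ProbabilityTheory.gaussianReal 0 1)
    (hZindep : ProbabilityTheory.iIndepFun
      (fun i => fun ω => Z ω i) P)
    (hJZ : ProbabilityTheory.IndepFun J Z P)
    (X : Ω → Fin d → ℝ) (hX : ∀ ω i, X ω i = μv (J ω) i + Z ω i) :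
    ∀ a b c : Fin d,
      (∫ ω, X ω a * X ω b * X ω c ∂P)
        - ∑ i : Fin d,
            ((∫ ω, X ω a ∂P) * (if i = b then (1 : ℝ) else 0) * (if i = c then 1 else 0)
          + (if i = a then (1 : ℝ) else 0) * (∫ ω, X ω b ∂P) * (if i = c then 1 else 0)
          + (if i = a then (1 : ℝ) else 0) * (if i = b then 1 else 0) * (∫ ω, X ω c ∂P))
        = ∑ j, p j * (μv j a * μv j b * μv j c) := by
  intro a b c
  classical
  have hZm : Measurable Z := measurable_pi_lambda _ hZmeas
  have aesmZ : ∀ i, AEStronglyMeasurable (fun ω => Z ω i) P :=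
    fun i => (hZmeas i).aestronglyMeasurable
  have hgJint : ∀ g : Fin m → ℝ, Integrable (fun ω => g (J ω)) P :=
    fun g => gmix_integrable_J P J hJmeas g
  have hgJ : ∀ g : Fin m → ℝ, ∫ ω, g (J ω) ∂P = ∑ j, p j * g j :=
    fun g => gmix_integral_J P J hJmeas p hp hJ g
  -- moments of Z components
  have hmapn : ∀ (i : Fin d) (n : ℕ),
      ∫ ω, (Z ω i) ^ n ∂P = ∫ x, x ^ n ∂(ProbabilityTheory.gaussianReal 0 1) := by
    intro i n
    rw [← hZlaw i]
    exact (integral_map (hZmeas i).aemeasurable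
      (by fun_prop : AEStronglyMeasurable (fun x : ℝ => x ^ n) _)).symm
  have intZpow : ∀ (i : Fin d) (n : ℕ), Integrable (fun ω => (Z ω i) ^ n) P := by
    intro i n
    have h1 : Integrable (fun x : ℝ => x ^ n) (ProbabilityTheory.gaussianReal 0 1) :=
      gmix_integrable_pow n
    rw [← hZlaw i] at h1
    exact (integrable_map_measure (measurable_id.pow_const n).aestronglyMeasurable
      (hZmeas i).aemeasurable).mp h1
  have intZ : ∀ i, Integrable (fun ω => Z ω i) P := by
    intro i; have := intZpow i 1; simpa using this
  have EZ1 : ∀ i, ∫ ω, Z ω i ∂P = 0 := by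
    intro i
    have h := hmapn i 1
    rw [gmix_m_odd 1 odd_one] at h
    simpa using h
  have EZ2self : ∀ i, ∫ ω, Z ω i * Z ω i ∂P = 1 := by
    intro i
    have h := hmapn i 2
    rw [gmix_m2] at h
    simpa [pow_two] using h
  have intZ2 : ∀ i k, Integrable (fun ω => Z ω i * Z ω k) P := by
    intro i k
    by_cases h : i = k
    · subst h; have := intZpow i 2; simpa [pow_two] using this
    · exact (hZindep.indepFun h).integrable_mul (intZ i) (intZ k)
  have EZ2 : ∀ i k, ∫ ω, Z ω i * Z ω k ∂P = if i = k then 1 else 0 := by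
    intro i k
    by_cases h : i = k
    · subst h; rw [if_pos rfl]; exact EZ2self i
    · rw [if_neg h]
      have h2 := (hZindep.indepFun h).integral_mul_eq_mul_integral (aesmZ i) (aesmZ k)
      have h3 : ∫ ω, Z ω i * Z ω k ∂P
          = (∫ ω, Z ω i ∂P) * ∫ ω, Z ω k ∂P := h2
      rw [h3, EZ1 i, zero_mul]
  -- triple products of Z
  have intZ3 : ∀ i j k, Integrable (fun ω => Z ω i * Z ω j * Z ω k) P := by
    intro i j k
    by_cases hij : i = j
    · subst hij
      by_cases hik : i = k
      · subst hik
        have := intZpow i 3; simpa [pow_succ, pow_two, mul_assoc] using this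
      · have hind : ProbabilityTheory.IndepFun (fun ω => Z ω i * Z ω i)
            (fun ω => Z ω k) P :=
          ((hZindep.indepFun hik).comp (measurable_id.mul measurable_id) measurable_id)
        exact hind.integrable_mul (intZ2 i i) (intZ k)
    · by_cases hjk : j = k
      · subst hjk
        have hind : ProbabilityTheory.IndepFun (fun ω => Z ω i)
            (fun ω => Z ω j * Z ω j) P :=
          ((hZindep.indepFun hij).comp measurable_id (measurable_id.mul measurable_id))
        have : Integrable ((fun ω => Z ω i) * fun ω => Z ω j * Z ω j) P :=
          hind.integrable_mul (intZ i) (intZ2 j j)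
        refine this.congr (Filter.Eventually.of_forall fun ω => ?_)
        simp [Pi.mul_apply]; ring
      · by_cases hik : i = k
        · subst hik
          have hind : ProbabilityTheory.IndepFun (fun ω => Z ω i * Z ω i)
              (fun ω => Z ω j) P :=
            ((hZindep.indepFun hij).comp (measurable_id.mul measurable_id) measurable_id)
          have : Integrable ((fun ω => Z ω i * Z ω i) * fun ω => Z ω j) P :=
            hind.integrable_mul (intZ2 i i) (intZ j)
          refine this.congr (Filter.Eventually.of_forall fun ω => ?_)
          simp [Pi.mul_apply]; ring
        · have hind : ProbabilityTheory.IndepFun (fun ω => Z ω i * Z ω j)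
              (fun ω => Z ω k) P := by
            have hk : k ∉ ({i, j} : Finset (Fin d)) := by
              simp only [Finset.mem_insert, Finset.mem_singleton]
              push_neg
              exact ⟨fun h => hik h.symm, fun h => hjk h.symm⟩
            have := hZindep.indepFun_finsetProd_of_notMem hZmeas hk
            have hprod : (∏ l ∈ ({i, j} : Finset (Fin d)), fun ω => Z ω l)
                = fun ω => Z ω i * Z ω j := by
              rw [Finset.prod_pair hij]; rfl
            rwa [hprod] at this
          exact hind.integrable_mul (intZ2 i j) (intZ k)
  -- EZ3
  have EZ3 : ∀ i j k, ∫ ω, Z ω i * Z ω j * Z ω k ∂P = 0 := by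
    intro i j k
    by_cases hij : i = j
    · subst hij
      by_cases hik : i = k
      · subst hik
        have h := hmapn i 3
        rw [gmix_m_odd 3 ⟨1, by norm_num⟩] at h
        have he : ∀ ω, Z ω i * Z ω i * Z ω i = (Z ω i) ^ 3 := fun ω => by ring
        simp_rw [he]
        exact h
      · have hind : ProbabilityTheory.IndepFun (fun ω => Z ω i * Z ω i)
            (fun ω => Z ω k) P :=
          ((hZindep.indepFun hik).comp (measurable_id.mul measurable_id) measurable_id)
        have h2 : ∫ ω, (Z ω i * Z ω i) * Z ω k ∂P
            = (∫ ω, Z ω i * Z ω i ∂P) * ∫ ω, Z ω k ∂P :=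
          hind.integral_mul_eq_mul_integral ((hZmeas i).mul (hZmeas i)).aestronglyMeasurable (aesmZ k)
        rw [h2, EZ1 k, mul_zero]
    · by_cases hjk : j = k
      · subst hjk
        have hind : ProbabilityTheory.IndepFun (fun ω => Z ω i)
            (fun ω => Z ω j * Z ω j) P :=
          ((hZindep.indepFun hij).comp measurable_id (measurable_id.mul measurable_id))
        have h2 : ∫ ω, Z ω i * (Z ω j * Z ω j) ∂P
            = (∫ ω, Z ω i ∂P) * ∫ ω, Z ω j * Z ω j ∂P :=
          hind.integral_mul_eq_mul_integral (aesmZ i) ((hZmeas j).mul (hZmeas j)).aestronglyMeasurable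
        have he : ∀ ω, Z ω i * Z ω j * Z ω j = Z ω i * (Z ω j * Z ω j) := fun ω => by ring
        simp_rw [he]
        rw [h2, EZ1 i, zero_mul]
      · by_cases hik : i = k
        · subst hik
          have hind : ProbabilityTheory.IndepFun (fun ω => Z ω i * Z ω i)
              (fun ω => Z ω j) P :=
            ((hZindep.indepFun hij).comp (measurable_id.mul measurable_id) measurable_id)
          have h2 : ∫ ω, (Z ω i * Z ω i) * Z ω j ∂P
              = (∫ ω, Z ω i * Z ω i ∂P) * ∫ ω, Z ω j ∂P :=
            hind.integral_mul_eq_mul_integral ((hZmeas i).mul (hZmeas i)).aestronglyMeasurable (aesmZ j)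
          have he : ∀ ω, Z ω i * Z ω j * Z ω i = (Z ω i * Z ω i) * Z ω j := fun ω => by ring
          simp_rw [he]
          rw [h2, EZ1 j, mul_zero]
        · have hind : ProbabilityTheory.IndepFun (fun ω => Z ω i * Z ω j)
              (fun ω => Z ω k) P := by
            have hk : k ∉ ({i, j} : Finset (Fin d)) := by
              simp only [Finset.mem_insert, Finset.mem_singleton]
              push_neg
              exact ⟨fun h => hik h.symm, fun h => hjk h.symm⟩
            have := hZindep.indepFun_finsetProd_of_notMem hZmeas hk
            have hprod : (∏ l ∈ ({i, j} : Finset (Fin d)), fun ω => Z ω l)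
                = fun ω => Z ω i * Z ω j := by
              rw [Finset.prod_pair hij]; rfl
            rwa [hprod] at this
          have h2 : ∫ ω, (Z ω i * Z ω j) * Z ω k ∂P
              = (∫ ω, Z ω i * Z ω j ∂P) * ∫ ω, Z ω k ∂P :=
            hind.integral_mul_eq_mul_integral ((hZmeas i).mul (hZmeas j)).aestronglyMeasurable (aesmZ k)
          rw [h2, EZ1 k, mul_zero]
  -- independence of J-side and Z-side
  have keyJZ : ∀ (g : Fin m → ℝ) (ψ : (Fin d → ℝ) → ℝ), Measurable ψ →
      ∫ ω, g (J ω) * ψ (Z ω) ∂P = (∑ j, p j * g j) * ∫ ω, ψ (Z ω) ∂P := by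
    intro g ψ hψ
    have hind : ProbabilityTheory.IndepFun (g ∘ J) (ψ ∘ Z) P :=
      hJZ.comp (measurable_of_countable g) hψ
    have h2 : ∫ ω, g (J ω) * ψ (Z ω) ∂P = (∫ ω, g (J ω) ∂P) * ∫ ω, ψ (Z ω) ∂P :=
      hind.integral_mul_eq_mul_integral ((measurable_of_countable g).comp hJmeas).aestronglyMeasurable
        (hψ.comp hZm).aestronglyMeasurable
    rw [h2, hgJ g]
  have intJZ : ∀ (g : Fin m → ℝ) (ψ : Ω → ℝ), Integrable ψ P →
      Integrable (fun ω => g (J ω) * ψ ω) P := by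
    intro g ψ hint
    refine hint.bdd_mul (c := ∑ j, |g j|) ((measurable_of_countable g).comp hJmeas).aestronglyMeasurable ?_
    refine Filter.Eventually.of_forall (fun ω => ?_)
    rw [Real.norm_eq_abs]
    exact Finset.single_le_sum (f := fun j => |g j|) (fun j _ => abs_nonneg (g j))
      (Finset.mem_univ (J ω))
  -- first moments of X
  have EX : ∀ i, ∫ ω, X ω i ∂P = ∑ j, p j * μv j i := by
    intro i
    have he : (fun ω => X ω i) = fun ω => (fun j => μv j i) (J ω) + Z ω i := by
      funext ω; exact hX ω i
    rw [he, integral_add (hgJint (fun j => μv j i)) (intZ i), hgJ (fun j => μv j i), EZ1 i,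
      add_zero]
  -- expansion of the third moment
  have expand : (fun ω => X ω a * X ω b * X ω c) = fun ω =>
      (fun j => μv j a * μv j b * μv j c) (J ω)
      + ((fun j => μv j a * μv j b) (J ω) * Z ω c
      + ((fun j => μv j a * μv j c) (J ω) * Z ω b
      + ((fun j => μv j b * μv j c) (J ω) * Z ω a
      + ((fun j => μv j a) (J ω) * (Z ω b * Z ω c)
      + ((fun j => μv j b) (J ω) * (Z ω a * Z ω c)
      + ((fun j => μv j c) (J ω) * (Z ω a * Z ω b)
      + Z ω a * Z ω b * Z ω c)))))) := by
    funext ω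
    rw [hX ω a, hX ω b, hX ω c]
    ring
  have i1 : Integrable (fun ω => (fun j => μv j a * μv j b * μv j c) (J ω)) P :=
    hgJint (fun j => μv j a * μv j b * μv j c)
  have i2 : Integrable (fun ω => (fun j => μv j a * μv j b) (J ω) * Z ω c) P :=
    intJZ (fun j => μv j a * μv j b) (fun ω => Z ω c) (intZ c)
  have i3 : Integrable (fun ω => (fun j => μv j a * μv j c) (J ω) * Z ω b) P :=
    intJZ (fun j => μv j a * μv j c) (fun ω => Z ω b) (intZ b)
  have i4 : Integrable (fun ω => (fun j => μv j b * μv j c) (J ω) * Z ω a) P :=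
    intJZ (fun j => μv j b * μv j c) (fun ω => Z ω a) (intZ a)
  have i5 : Integrable (fun ω => (fun j => μv j a) (J ω) * (Z ω b * Z ω c)) P :=
    intJZ (fun j => μv j a) (fun ω => Z ω b * Z ω c) (intZ2 b c)
  have i6 : Integrable (fun ω => (fun j => μv j b) (J ω) * (Z ω a * Z ω c)) P :=
    intJZ (fun j => μv j b) (fun ω => Z ω a * Z ω c) (intZ2 a c)
  have i7 : Integrable (fun ω => (fun j => μv j c) (J ω) * (Z ω a * Z ω b)) P :=
    intJZ (fun j => μv j c) (fun ω => Z ω a * Z ω b) (intZ2 a b)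
  have i8 : Integrable (fun ω => Z ω a * Z ω b * Z ω c) P := intZ3 a b c
  have EXXX : ∫ ω, X ω a * X ω b * X ω c ∂P
      = (∑ j, p j * (μv j a * μv j b * μv j c))
        + (∑ j, p j * μv j a) * (if b = c then (1:ℝ) else 0)
        + (∑ j, p j * μv j b) * (if a = c then (1:ℝ) else 0)
        + (∑ j, p j * μv j c) * (if a = b then (1:ℝ) else 0) := by
    rw [expand]
    have s1 : ∫ ω, ((fun j => μv j a * μv j b * μv j c) (J ω) + ((fun j => μv j a * μv j b) (J ω) * Z ω c + ((fun j => μv j a * μv j c) (J ω) * Z ω b + ((fun j => μv j b * μv j c) (J ω) * Z ω a + ((fun j => μv j a) (J ω) * (Z ω b * Z ω c) + ((fun j => μv j b) (J ω) * (Z ω a * Z ω c) + ((fun j => μv j c) (J ω) * (Z ω a * Z ω b) + (Z ω a * Z ω b * Z ω c)))))))) ∂P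
        = (∫ ω, (fun j => μv j a * μv j b * μv j c) (J ω) ∂P) + ∫ ω, ((fun j => μv j a * μv j b) (J ω) * Z ω c + ((fun j => μv j a * μv j c) (J ω) * Z ω b + ((fun j => μv j b * μv j c) (J ω) * Z ω a + ((fun j => μv j a) (J ω) * (Z ω b * Z ω c) + ((fun j => μv j b) (J ω) * (Z ω a * Z ω c) + ((fun j => μv j c) (J ω) * (Z ω a * Z ω b) + (Z ω a * Z ω b * Z ω c))))))) ∂P :=
      integral_add i1 (i2.add (i3.add (i4.add (i5.add (i6.add (i7.add (i8)))))))
    have s2 : ∫ ω, ((fun j => μv j a * μv j b) (J ω) * Z ω c + ((fun j => μv j a * μv j c) (J ω) * Z ω b + ((fun j => μv j b * μv j c) (J ω) * Z ω a + ((fun j => μv j a) (J ω) * (Z ω b * Z ω c) + ((fun j => μv j b) (J ω) * (Z ω a * Z ω c) + ((fun j => μv j c) (J ω) * (Z ω a * Z ω b) + (Z ω a * Z ω b * Z ω c))))))) ∂P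
        = (∫ ω, (fun j => μv j a * μv j b) (J ω) * Z ω c ∂P) + ∫ ω, ((fun j => μv j a * μv j c) (J ω) * Z ω b + ((fun j => μv j b * μv j c) (J ω) * Z ω a + ((fun j => μv j a) (J ω) * (Z ω b * Z ω c) + ((fun j => μv j b) (J ω) * (Z ω a * Z ω c) + ((fun j => μv j c) (J ω) * (Z ω a * Z ω b) + (Z ω a * Z ω b * Z ω c)))))) ∂P :=
      integral_add i2 (i3.add (i4.add (i5.add (i6.add (i7.add (i8))))))
    have s3 : ∫ ω, ((fun j => μv j a * μv j c) (J ω) * Z ω b + ((fun j => μv j b * μv j c) (J ω) * Z ω a + ((fun j => μv j a) (J ω) * (Z ω b * Z ω c) + ((fun j => μv j b) (J ω) * (Z ω a * Z ω c) + ((fun j => μv j c) (J ω) * (Z ω a * Z ω b) + (Z ω a * Z ω b * Z ω c)))))) ∂P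
        = (∫ ω, (fun j => μv j a * μv j c) (J ω) * Z ω b ∂P) + ∫ ω, ((fun j => μv j b * μv j c) (J ω) * Z ω a + ((fun j => μv j a) (J ω) * (Z ω b * Z ω c) + ((fun j => μv j b) (J ω) * (Z ω a * Z ω c) + ((fun j => μv j c) (J ω) * (Z ω a * Z ω b) + (Z ω a * Z ω b * Z ω c))))) ∂P :=
      integral_add i3 (i4.add (i5.add (i6.add (i7.add (i8)))))
    have s4 : ∫ ω, ((fun j => μv j b * μv j c) (J ω) * Z ω a + ((fun j => μv j a) (J ω) * (Z ω b * Z ω c) + ((fun j => μv j b) (J ω) * (Z ω a * Z ω c) + ((fun j => μv j c) (J ω) * (Z ω a * Z ω b) + (Z ω a * Z ω b * Z ω c))))) ∂P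
        = (∫ ω, (fun j => μv j b * μv j c) (J ω) * Z ω a ∂P) + ∫ ω, ((fun j => μv j a) (J ω) * (Z ω b * Z ω c) + ((fun j => μv j b) (J ω) * (Z ω a * Z ω c) + ((fun j => μv j c) (J ω) * (Z ω a * Z ω b) + (Z ω a * Z ω b * Z ω c)))) ∂P :=
      integral_add i4 (i5.add (i6.add (i7.add (i8))))
    have s5 : ∫ ω, ((fun j => μv j a) (J ω) * (Z ω b * Z ω c) + ((fun j => μv j b) (J ω) * (Z ω a * Z ω c) + ((fun j => μv j c) (J ω) * (Z ω a * Z ω b) + (Z ω a * Z ω b * Z ω c)))) ∂P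
        = (∫ ω, (fun j => μv j a) (J ω) * (Z ω b * Z ω c) ∂P) + ∫ ω, ((fun j => μv j b) (J ω) * (Z ω a * Z ω c) + ((fun j => μv j c) (J ω) * (Z ω a * Z ω b) + (Z ω a * Z ω b * Z ω c))) ∂P :=
      integral_add i5 (i6.add (i7.add (i8)))
    have s6 : ∫ ω, ((fun j => μv j b) (J ω) * (Z ω a * Z ω c) + ((fun j => μv j c) (J ω) * (Z ω a * Z ω b) + (Z ω a * Z ω b * Z ω c))) ∂P
        = (∫ ω, (fun j => μv j b) (J ω) * (Z ω a * Z ω c) ∂P) + ∫ ω, ((fun j => μv j c) (J ω) * (Z ω a * Z ω b) + (Z ω a * Z ω b * Z ω c)) ∂P :=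
      integral_add i6 (i7.add (i8))
    have s7 : ∫ ω, ((fun j => μv j c) (J ω) * (Z ω a * Z ω b) + (Z ω a * Z ω b * Z ω c)) ∂P
        = (∫ ω, (fun j => μv j c) (J ω) * (Z ω a * Z ω b) ∂P) + ∫ ω, (Z ω a * Z ω b * Z ω c) ∂P :=
      integral_add i7 (i8)
    rw [s1, s2, s3, s4, s5, s6, s7]
    have v1 := hgJ (fun j => μv j a * μv j b * μv j c)
    have v2 := keyJZ (fun j => μv j a * μv j b) (fun x => x c) (measurable_pi_apply c)
    have v3 := keyJZ (fun j => μv j a * μv j c) (fun x => x b) (measurable_pi_apply b)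
    have v4 := keyJZ (fun j => μv j b * μv j c) (fun x => x a) (measurable_pi_apply a)
    have v5 := keyJZ (fun j => μv j a) (fun x => x b * x c)
      ((measurable_pi_apply b).mul (measurable_pi_apply c))
    have v6 := keyJZ (fun j => μv j b) (fun x => x a * x c)
      ((measurable_pi_apply a).mul (measurable_pi_apply c))
    have v7 := keyJZ (fun j => μv j c) (fun x => x a * x b)
      ((measurable_pi_apply a).mul (measurable_pi_apply b))
    rw [EZ1 c, mul_zero] at v2
    rw [EZ1 b, mul_zero] at v3
    rw [EZ1 a, mul_zero] at v4
    rw [EZ2 b c] at v5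
    rw [EZ2 a c] at v6
    rw [EZ2 a b] at v7
    rw [v1, v2, v3, v4, v5, v6, v7, EZ3 a b c]
    ring
  -- the delta sums
  have hd1 : ∑ i : Fin d, (∫ ω, X ω a ∂P) * (if i = b then (1:ℝ) else 0)
        * (if i = c then 1 else 0)
      = (∫ ω, X ω a ∂P) * (if b = c then 1 else 0) := by
    rw [Finset.sum_eq_single b]
    · simp
    · intro i _ hi; rw [if_neg hi, mul_zero, zero_mul]
    · intro h; exact absurd (Finset.mem_univ b) h
  have hd2 : ∑ i : Fin d, (if i = a then (1:ℝ) else 0) * (∫ ω, X ω b ∂P)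
        * (if i = c then 1 else 0)
      = (∫ ω, X ω b ∂P) * (if a = c then 1 else 0) := by
    rw [Finset.sum_eq_single a]
    · simp
    · intro i _ hi; rw [if_neg hi, zero_mul, zero_mul]
    · intro h; exact absurd (Finset.mem_univ a) h
  have hd3 : ∑ i : Fin d, (if i = a then (1:ℝ) else 0) * (if i = b then (1:ℝ) else 0)
        * (∫ ω, X ω c ∂P)
      = (∫ ω, X ω c ∂P) * (if a = b then 1 else 0) := by
    rw [Finset.sum_eq_single a]
    · simp [mul_comm]
    · intro i _ hi; rw [if_neg hi, zero_mul, zero_mul]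
    · intro h; exact absurd (Finset.mem_univ a) h
  rw [Finset.sum_add_distrib, Finset.sum_add_distrib, hd1, hd2, hd3, EXXX, EX a, EX b, EX c]
  ring
end

section
/- Uniqueness of eigenvalues of ODECO tensors: if Σ_{i=1}^r λ_i a_i ∘ b_i ∘ c_i = Σ_{i=1}^r μ_i x_i ∘ y_i ∘ z_i where both decompositions are ODECO with strictly positive coefficients, then the multisets {λ_1, …, λ_r} and {μ_1, …, μ_r} coincide. -/
/-!
Contracting the tensor with `a i ⊗ b i ⊗ c i` gives `λ = K μ` for the matrix
`K i j = ⟪a i, x j⟫ ⟪b i, y j⟫ ⟪c i, z j⟫`, and contracting with `x j ⊗ y j ⊗ z j` gives `μ = Kᵀ λ`.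
Bessel's inequality, Cauchy–Schwarz and AM–GM show that the rows and columns of `|K|` sum to at
most one. For nonnegative vectors this makes each of `λ`, `μ` weakly majorized by the other
(the sum of the `k` largest entries of `K μ` is at most that of `μ`), so their sorted
rearrangements coincide.
-/

open Finset Matrix

section Substochastic
variable {ι κ : Type*} [Fintype ι] [Fintype κ]

def IsAbsDoublySubstochastic (K : Matrix ι κ ℝ) : Prop :=
  (∀ i, ∑ j, |K i j| ≤ 1) ∧ ∀ j, ∑ i, |K i j| ≤ 1

lemma IsAbsDoublySubstochastic.transpose {K : Matrix ι κ ℝ} (hK : IsAbsDoublySubstochastic K) :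
    IsAbsDoublySubstochastic Kᵀ :=
  ⟨hK.2, hK.1⟩

lemma IsAbsDoublySubstochastic.submatrix {ι' κ' : Type*} [Fintype ι'] [Fintype κ']
    {K : Matrix ι κ ℝ} (hK : IsAbsDoublySubstochastic K) (e : ι' ≃ ι) (e' : κ' ≃ κ) :
    IsAbsDoublySubstochastic (K.submatrix e e') :=
  ⟨fun i => (Equiv.sum_comp e' fun j => |K (e i) j|).trans_le (hK.1 (e i)),
    fun j => (Equiv.sum_comp e fun i => |K i (e' j)|).trans_le (hK.2 (e' j))⟩

/-- `T` carries the `#T` largest values of `g`, as witnessed by the threshold `t`. -/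
lemma IsAbsDoublySubstochastic.sum_mulVec_le {K : Matrix ι κ ℝ} (hK : IsAbsDoublySubstochastic K)
    {g : κ → ℝ} (hg : 0 ≤ g) {S : Finset ι} {T : Finset κ} (hST : #S ≤ #T) {t : ℝ} (ht : 0 ≤ t)
    (hT : ∀ j ∈ T, t ≤ g j) (hTc : ∀ j ∉ T, g j ≤ t) :
    ∑ i ∈ S, (K *ᵥ g) i ≤ ∑ j ∈ T, g j := by
  classical
  set w : κ → ℝ := fun j => ∑ i ∈ S, |K i j|
  have hw0 : ∀ j, 0 ≤ w j := fun j => sum_nonneg fun i _ => abs_nonneg _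
  have hw1 : ∀ j, w j ≤ 1 := fun j =>
    (sum_le_sum_of_subset_of_nonneg (subset_univ S) fun i _ _ => abs_nonneg _).trans (hK.2 j)
  have hwsum : ∑ j, w j ≤ #T := by
    calc ∑ j, w j = ∑ i ∈ S, ∑ j, |K i j| := sum_comm
      _ ≤ ∑ _i ∈ S, (1 : ℝ) := sum_le_sum fun i _ => hK.1 i
      _ ≤ #T := by simpa using hST
  calc ∑ i ∈ S, (K *ᵥ g) i ≤ ∑ i ∈ S, ∑ j, |K i j| * g j :=
        sum_le_sum fun i _ => sum_le_sum fun j _ =>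
          mul_le_mul_of_nonneg_right (le_abs_self _) (hg j)
    _ = ∑ j, w j * g j := by rw [sum_comm]; simp only [w, sum_mul]
    _ ≤ ∑ j, (w j * t + if j ∈ T then g j - t else 0) := by
        refine sum_le_sum fun j _ => ?_
        split_ifs with hj
        · nlinarith [hT j hj, hw1 j]
        · nlinarith [hTc j hj, hw0 j]
    _ = (∑ j, w j) * t + (∑ j ∈ T, g j - #T * t) := by
        rw [sum_add_distrib, ← sum_mul, ← sum_filter, sum_sub_distrib]
        simp
    _ ≤ ∑ j ∈ T, g j := by nlinarith

end Substochastic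

section Sorted
variable {r : ℕ}

lemma IsAbsDoublySubstochastic.sum_tail_mulVec_le {K : Matrix (Fin r) (Fin r) ℝ}
    (hK : IsAbsDoublySubstochastic K) {g : Fin r → ℝ} (hg : 0 ≤ g) (hmono : Monotone g) (k : ℕ) :
    ∑ i : Fin r with k ≤ i.val, (K *ᵥ g) i ≤ ∑ j : Fin r with k ≤ j.val, g j := by
  rcases lt_or_ge k r with hk | hk
  · refine hK.sum_mulVec_le hg le_rfl (hg ⟨k, hk⟩) (fun j hj => hmono ?_) (fun j hj => hmono ?_)
    · simpa [Fin.le_def] using hj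
    · simpa [Fin.le_def] using (lt_of_not_ge (by simpa using hj)).le
  · have hempty : ∀ i : Fin r, ¬ k ≤ i.val := fun i => by omega
    simp [hempty]

lemma eq_of_forall_sum_tail_eq {f g : Fin r → ℝ}
    (h : ∀ k : ℕ, ∑ i : Fin r with k ≤ i.val, f i = ∑ i : Fin r with k ≤ i.val, g i) :
    f = g := by
  have tail_sub : ∀ (φ : Fin r → ℝ) (i : Fin r),
      ∑ j with i.val ≤ j.val, φ j - ∑ j with i.val + 1 ≤ j.val, φ j = φ i := fun φ i => by
    rw [sum_filter, sum_filter, ← sum_sub_distrib, ← Fintype.sum_ite_eq' i φ]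
    refine sum_congr rfl fun j _ => ?_
    rcases eq_or_ne j i with rfl | hji
    · simp
    · have : j.val ≠ i.val := Fin.val_ne_of_ne hji
      simp only [if_neg hji]
      split_ifs <;> first | (exfalso; omega) | simp
  funext i
  rw [← tail_sub f, ← tail_sub g, h, h]

theorem IsAbsDoublySubstochastic.exists_perm_eq {K : Matrix (Fin r) (Fin r) ℝ}
    (hK : IsAbsDoublySubstochastic K) {lam mu : Fin r → ℝ} (hlam : 0 ≤ lam) (hmu : 0 ≤ mu)
    (h₁ : K *ᵥ mu = lam) (h₂ : Kᵀ *ᵥ lam = mu) :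
    ∃ σ : Equiv.Perm (Fin r), ∀ i, mu (σ i) = lam i := by
  set σ := Tuple.sort lam
  set τ := Tuple.sort mu
  set K' := K.submatrix σ τ
  have hK' : IsAbsDoublySubstochastic K' := hK.submatrix σ τ
  have h₁' : K' *ᵥ (mu ∘ τ) = lam ∘ σ := by
    rw [submatrix_mulVec_equiv, Function.comp_assoc, Equiv.self_comp_symm, Function.comp_id, h₁]
  have h₂' : K'ᵀ *ᵥ (lam ∘ σ) = mu ∘ τ := by
    rw [transpose_submatrix, submatrix_mulVec_equiv, Function.comp_assoc, Equiv.self_comp_symm,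
      Function.comp_id, h₂]
  have hsorted : lam ∘ σ = mu ∘ τ := by
    refine eq_of_forall_sum_tail_eq fun k => le_antisymm ?_ ?_
    · simpa only [h₁'] using
        hK'.sum_tail_mulVec_le (g := mu ∘ τ) (fun i => hmu (τ i)) (Tuple.monotone_sort mu) k
    · simpa only [h₂'] using
        hK'.transpose.sum_tail_mulVec_le (g := lam ∘ σ) (fun i => hlam (σ i))
          (Tuple.monotone_sort lam) k
  refine ⟨σ.symm.trans τ, fun i => ?_⟩
  simpa using (congrFun hsorted (σ.symm i)).symm

end Sorted

section Tensor
variable {ι κ n : Type*} [Fintype n]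

def IsOrthonormalFamily [DecidableEq ι] (v : ι → n → ℝ) : Prop :=
  ∀ i j, v i ⬝ᵥ v j = if i = j then 1 else 0

lemma IsOrthonormalFamily.dotProduct_self [DecidableEq ι] {v : ι → n → ℝ}
    (hv : IsOrthonormalFamily v) (i : ι) : v i ⬝ᵥ v i = 1 := by
  simpa using hv i i

lemma IsOrthonormalFamily.sum_sq_dotProduct_le [Fintype ι] [DecidableEq ι] {v : ι → n → ℝ}
    (hv : IsOrthonormalFamily v) (u : n → ℝ) : ∑ i, (u ⬝ᵥ v i) ^ 2 ≤ u ⬝ᵥ u := by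
  have hon : Orthonormal ℝ fun i => WithLp.toLp 2 (v i) := by
    rw [orthonormal_iff_ite]
    intro i j
    rw [EuclideanSpace.inner_toLp_toLp, star_trivial, dotProduct_comm]
    exact hv i j
  simpa [EuclideanSpace.inner_toLp_toLp, EuclideanSpace.norm_eq, dotProduct, sq,
    Finset.sum_nonneg, mul_self_nonneg] using hon.sum_inner_products_le (WithLp.toLp 2 u) (s := univ)

lemma sq_dotProduct_le (u v : n → ℝ) : (u ⬝ᵥ v) ^ 2 ≤ (u ⬝ᵥ u) * (v ⬝ᵥ v) := by
  simpa only [dotProduct, sq] using Finset.sum_mul_sq_le_sq_mul_sq univ u v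

def cpTensor [Fintype κ] (t : κ → ℝ) (f g h : κ → n → ℝ) (p q s : n) : ℝ :=
  ∑ j, t j * (f j p * g j q * h j s)

def contract (T : n → n → n → ℝ) (u v w : n → ℝ) : ℝ :=
  ∑ p, ∑ q, ∑ s, T p q s * (u p * v q * w s)

lemma contract_cpTensor [Fintype κ] (t : κ → ℝ) (f g h : κ → n → ℝ) (u v w : n → ℝ) :
    contract (cpTensor t f g h) u v w = ∑ j, t j * ((f j ⬝ᵥ u) * (g j ⬝ᵥ v) * (h j ⬝ᵥ w)) := by
  simp only [contract, cpTensor, sum_mul]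
  conv_lhs => enter [2, p, 2, q]; rw [sum_comm]
  conv_lhs => enter [2, p]; rw [sum_comm]
  rw [sum_comm]
  refine sum_congr rfl fun j _ => ?_
  rw [mul_assoc (f j ⬝ᵥ u), dotProduct, dotProduct, dotProduct, sum_mul_sum, sum_mul_sum,
    mul_sum]
  simp only [mul_sum]
  exact sum_congr rfl fun p _ => sum_congr rfl fun q _ => sum_congr rfl fun s _ => by ring

lemma contract_cpTensor_self [Fintype κ] [DecidableEq κ] (t : κ → ℝ) {f g h : κ → n → ℝ}
    (hf : IsOrthonormalFamily f) (hg : IsOrthonormalFamily g) (hh : IsOrthonormalFamily h)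
    (i : κ) : contract (cpTensor t f g h) (f i) (g i) (h i) = t i := by
  simp [contract_cpTensor, hf _ i, hg _ i, hh _ i]

def coupling (a b c : ι → n → ℝ) (x y z : κ → n → ℝ) : Matrix ι κ ℝ :=
  of fun i j => (a i ⬝ᵥ x j) * (b i ⬝ᵥ y j) * (c i ⬝ᵥ z j)

lemma coupling_transpose (a b c : ι → n → ℝ) (x y z : κ → n → ℝ) :
    (coupling a b c x y z)ᵀ = coupling x y z a b c := by
  ext j i
  simp only [coupling, transpose_apply, of_apply, dotProduct_comm (a i), dotProduct_comm (b i),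
    dotProduct_comm (c i)]

lemma coupling_mulVec_of_cpTensor_eq [Fintype ι] [DecidableEq ι] [Fintype κ] {lam : ι → ℝ}
    {mu : κ → ℝ} {a b c : ι → n → ℝ} {x y z : κ → n → ℝ} (ha : IsOrthonormalFamily a)
    (hb : IsOrthonormalFamily b) (hc : IsOrthonormalFamily c)
    (heq : cpTensor lam a b c = cpTensor mu x y z) :
    coupling a b c x y z *ᵥ mu = lam := by
  funext i
  rw [← contract_cpTensor_self lam ha hb hc i, heq, contract_cpTensor]
  simp only [dotProduct_comm (x _), dotProduct_comm (y _), dotProduct_comm (z _)]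
  exact sum_congr rfl fun j _ => mul_comm _ _

/-- Cauchy–Schwarz bounds the third factor by one, and AM–GM with Bessel's inequality bounds the
sum of the products of the first two. -/
lemma sum_abs_coupling_le_one [Fintype κ] [DecidableEq κ] {a b c : ι → n → ℝ}
    {x y z : κ → n → ℝ} {i : ι} (ha : a i ⬝ᵥ a i = 1) (hb : b i ⬝ᵥ b i = 1)
    (hc : c i ⬝ᵥ c i = 1) (hx : IsOrthonormalFamily x) (hy : IsOrthonormalFamily y)
    (hz : ∀ j, z j ⬝ᵥ z j = 1) :
    ∑ j, |coupling a b c x y z i j| ≤ 1 := by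
  have hcz : ∀ j, |c i ⬝ᵥ z j| ≤ 1 := fun j => by
    rw [← sq_le_one_iff_abs_le_one]
    simpa [hc, hz j] using sq_dotProduct_le (c i) (z j)
  calc ∑ j, |coupling a b c x y z i j|
      ≤ ∑ j, ((a i ⬝ᵥ x j) ^ 2 + (b i ⬝ᵥ y j) ^ 2) / 2 := by
        refine sum_le_sum fun j _ => ?_
        rw [coupling, of_apply, abs_mul, abs_mul, ← sq_abs (a i ⬝ᵥ x j), ← sq_abs (b i ⬝ᵥ y j)]
        nlinarith [two_mul_le_add_sq |a i ⬝ᵥ x j| |b i ⬝ᵥ y j|, hcz j,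
          mul_nonneg (abs_nonneg (a i ⬝ᵥ x j)) (abs_nonneg (b i ⬝ᵥ y j))]
    _ = (∑ j, (a i ⬝ᵥ x j) ^ 2 + ∑ j, (b i ⬝ᵥ y j) ^ 2) / 2 := by
        rw [← sum_div, sum_add_distrib]
    _ ≤ 1 := by linarith [hx.sum_sq_dotProduct_le (a i), hy.sum_sq_dotProduct_le (b i)]

lemma isAbsDoublySubstochastic_coupling [Fintype ι] [DecidableEq ι] [Fintype κ] [DecidableEq κ]
    {a b c : ι → n → ℝ} {x y z : κ → n → ℝ} (ha : IsOrthonormalFamily a)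
    (hb : IsOrthonormalFamily b) (hc : IsOrthonormalFamily c) (hx : IsOrthonormalFamily x)
    (hy : IsOrthonormalFamily y) (hz : IsOrthonormalFamily z) :
    IsAbsDoublySubstochastic (coupling a b c x y z) := by
  refine ⟨fun i => sum_abs_coupling_le_one (ha.dotProduct_self i) (hb.dotProduct_self i)
    (hc.dotProduct_self i) hx hy hz.dotProduct_self, fun j => ?_⟩
  rw [← coupling_transpose x y z a b c]
  exact sum_abs_coupling_le_one (hx.dotProduct_self j) (hy.dotProduct_self j)
    (hz.dotProduct_self j) ha hb hc.dotProduct_self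

end Tensor

/-- Uniqueness of eigenvalues of ODECO tensors: if two ODECO decompositions
with strictly positive coefficients represent the same third-order tensor, then the
multisets of coefficients coincide (i.e., they agree up to a permutation). -/
theorem odeco_eigenvalues_unique
    (d r : ℕ) (lam mu : Fin r → ℝ)
    (a b c x y z : Fin r → Fin d → ℝ)
    (hlam : ∀ i, 0 < lam i) (hmu : ∀ i, 0 < mu i)
    (ha : ∀ i j, (∑ p, a i p * a j p) = if i = j then (1 : ℝ) else 0)
    (hb : ∀ i j, (∑ p, b i p * b j p) = if i = j then (1 : ℝ) else 0)
    (hc : ∀ i j, (∑ p, c i p * c j p) = if i = j then (1 : ℝ) else 0)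
    (hx : ∀ i j, (∑ p, x i p * x j p) = if i = j then (1 : ℝ) else 0)
    (hy : ∀ i j, (∑ p, y i p * y j p) = if i = j then (1 : ℝ) else 0)
    (hz : ∀ i j, (∑ p, z i p * z j p) = if i = j then (1 : ℝ) else 0)
    (heq : ∀ p q s, (∑ i, lam i * (a i p * b i q * c i s))
        = ∑ i, mu i * (x i p * y i q * z i s)) :
    ∃ σ : Equiv.Perm (Fin r), ∀ i, mu (σ i) = lam i := by
  have hT : cpTensor lam a b c = cpTensor mu x y z := funext₃ heq
  have h₁ : coupling a b c x y z *ᵥ mu = lam := coupling_mulVec_of_cpTensor_eq ha hb hc hT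
  have h₂ : (coupling a b c x y z)ᵀ *ᵥ lam = mu := by
    rw [coupling_transpose]
    exact coupling_mulVec_of_cpTensor_eq hx hy hz hT.symm
  exact (isAbsDoublySubstochastic_coupling ha hb hc hx hy hz).exists_perm_eq
    (fun i => (hlam i).le) (fun i => (hmu i).le) h₁ h₂
end
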